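/- Let H be a real Hilbert space with a Hilbert basis (orthonormal basis) (hᵢ)_{i∈ℕ}, let (μᵢ)_{i∈ℕ} be positive reals, let v⁰ ∈ H, let T > 0, and let f : [0,T] → H be continuous. Then for every t ∈ [0,T] the sequence i ↦ (sin(μᵢt)/μᵢ)·⟪v⁰,hᵢ⟫ + ∫₀ᵗ (sin(μᵢ(t−s))/μᵢ)·⟪f(s),hᵢ⟫ ds is square-summable, so the series u(t) = ∑ᵢ [ (sin(μᵢt)/μᵢ)·⟪v⁰,hᵢ⟫ + ∫₀ᵗ (sin(μᵢ(t−s))/μᵢ)·⟪f(s),hᵢ⟫ ds ]·hᵢ converges in H, and it satisfies ‖u(t)‖ ≤ t·‖v⁰‖ + ∫₀ᵗ (t−s)·‖f(s)‖ ds. -/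

import Mathlib

open scoped RealInnerProductSpace

/-!
Let `K r` act diagonally in the basis `(hᵢ)` with multipliers `sin (μᵢ r) / μᵢ`. Then the
coefficients in the statement are the coordinates of
`u(t) = K t v⁰ + ∫₀ᵗ K (t - s) (f s) ds`, so square summability and convergence of the series
are Parseval's identity for `u(t)`. Since `r ↦ sin (m r) / m` is 1-Lipschitz and vanishes at `0`
(for `m = 0` too, where it is the junk value `0 / 0 = 0`), `‖K r‖ ≤ |r|` and `r ↦ K r` is
1-Lipschitz in operator norm. This makes the integrand continuous, and the norm bound is the
triangle inequality for the sum and the integral.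
-/

open MeasureTheory Set Real
open scoped ENNReal lp

theorem lipschitzWith_sin_mul_div (m : ℝ) : LipschitzWith 1 fun r => sin (m * r) / m := by
  refine LipschitzWith.of_dist_le_mul fun r r' => ?_
  rw [NNReal.coe_one, one_mul, dist_eq_norm, dist_eq_norm, Real.norm_eq_abs, Real.norm_eq_abs,
    ← sub_div, abs_div]
  rcases eq_or_ne m 0 with rfl | hm
  · simp
  rw [div_le_iff₀ (abs_pos.2 hm)]
  calc |sin (m * r) - sin (m * r')| ≤ |m * r - m * r'| := abs_sin_sub_sin_le _ _
    _ = |r - r'| * |m| := by rw [← mul_sub, abs_mul, mul_comm]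

theorem abs_sin_mul_div_le (m r : ℝ) : |sin (m * r) / m| ≤ |r| := by
  simpa [abs_div] using (lipschitzWith_sin_mul_div m).dist_le_mul r 0

noncomputable def sineCoeffs {ι : Type*} (μ : ι → ℝ) (r : ℝ) : ℓ^∞(ι, ℝ) :=
  ⟨fun i => sin (μ i * r) / μ i,
    memℓp_infty ⟨|r|, by rintro _ ⟨i, rfl⟩; exact abs_sin_mul_div_le (μ i) r⟩⟩

section sineCoeffs

variable {ι : Type*} (μ : ι → ℝ)

@[simp]
theorem sineCoeffs_apply (r : ℝ) (i : ι) : sineCoeffs μ r i = sin (μ i * r) / μ i := rfl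

theorem norm_sineCoeffs_le (r : ℝ) : ‖sineCoeffs μ r‖ ≤ |r| :=
  lp.norm_le_of_forall_le (abs_nonneg r) fun i => abs_sin_mul_div_le (μ i) r

theorem lipschitzWith_sineCoeffs : LipschitzWith 1 (sineCoeffs μ) :=
  LipschitzWith.of_dist_le_mul fun r r' => by
    rw [NNReal.coe_one, one_mul, dist_eq_norm]
    exact lp.norm_le_of_forall_le dist_nonneg fun i => by
      simpa [Real.dist_eq] using (lipschitzWith_sin_mul_div (μ i)).dist_le_mul r r'

end sineCoeffs

namespace HilbertBasis

section diagonal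

variable {ι 𝕜 E : Type*} [RCLike 𝕜] [NormedAddCommGroup E] [InnerProductSpace 𝕜 E]
  (b : HilbertBasis ι 𝕜 E)

theorem memℓp_mul_repr (c : ℓ^∞(ι, 𝕜)) (x : E) : Memℓp (fun i => c i * b.repr x i) 2 :=
  ((lp.memℓp (b.repr x)).norm.const_mul ‖c‖).mono fun i => by
    rw [norm_mul]
    gcongr
    exact lp.norm_apply_le_norm ENNReal.top_ne_zero c i

noncomputable def diagonal (c : ℓ^∞(ι, 𝕜)) : E →L[𝕜] E :=
  LinearMap.mkContinuous
    { toFun := fun x => b.repr.symm ⟨_, b.memℓp_mul_repr c x⟩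
      map_add' := fun x y => by
        apply b.repr.injective
        ext i
        simp [mul_add]
        rfl
      map_smul' := fun a x => by
        apply b.repr.injective
        ext i
        simp [mul_left_comm] }
    ‖c‖ fun x => by
      change ‖b.repr.symm _‖ ≤ _
      rw [LinearIsometryEquiv.norm_map, ← b.repr.norm_map x, ← norm_norm c, ← norm_smul]
      exact lp.norm_mono two_ne_zero fun i => by
        simp only [lp.coeFn_smul, Pi.smul_apply, norm_smul, norm_mul, norm_norm]
        gcongr
        exact lp.norm_apply_le_norm ENNReal.top_ne_zero c i

@[simp]
theorem repr_diagonal (c : ℓ^∞(ι, 𝕜)) (x : E) (i : ι) :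
    b.repr (b.diagonal c x) i = c i * b.repr x i := by
  simp [diagonal]

theorem norm_diagonal_le (c : ℓ^∞(ι, 𝕜)) : ‖b.diagonal c‖ ≤ ‖c‖ :=
  LinearMap.mkContinuous_norm_le _ (norm_nonneg c) _

theorem diagonal_sub (c d : ℓ^∞(ι, 𝕜)) : b.diagonal (c - d) = b.diagonal c - b.diagonal d := by
  ext x
  apply b.repr.injective
  ext i
  simp [sub_mul]

theorem lipschitzWith_diagonal : LipschitzWith 1 b.diagonal :=
  LipschitzWith.of_dist_le_mul fun c d => by
    simpa [dist_eq_norm, ← diagonal_sub] using b.norm_diagonal_le (c - d)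

end diagonal

variable {ι E : Type*} [NormedAddCommGroup E] [InnerProductSpace ℝ E] (b : HilbertBasis ι ℝ E)

theorem summable_repr_sq (x : E) : Summable fun i => b.repr x i ^ 2 := by
  simpa [b.repr_apply_apply, real_inner_comm, sq] using b.summable_inner_mul_inner x x

theorem repr_intervalIntegral [CompleteSpace E] {g : ℝ → E} {a a' : ℝ}
    (hg : IntervalIntegrable g volume a a') (i : ι) :
    b.repr (∫ s in a..a', g s) i = ∫ s in a..a', b.repr (g s) i := by
  simp only [b.repr_apply_apply]
  exact ((innerSL ℝ (b i)).intervalIntegral_comp_comm hg).symm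

section sineKernel

variable (μ : ι → ℝ)

noncomputable def sineKernel (r : ℝ) : E →L[ℝ] E := b.diagonal (sineCoeffs μ r)

@[simp]
theorem repr_sineKernel (r : ℝ) (x : E) (i : ι) :
    b.repr (b.sineKernel μ r x) i = sin (μ i * r) / μ i * b.repr x i := by
  simp [sineKernel]

theorem norm_sineKernel_le (r : ℝ) : ‖b.sineKernel μ r‖ ≤ |r| :=
  (b.norm_diagonal_le _).trans (norm_sineCoeffs_le μ r)

theorem norm_sineKernel_apply_le {r : ℝ} (hr : 0 ≤ r) (x : E) :
    ‖b.sineKernel μ r x‖ ≤ r * ‖x‖ :=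
  (b.sineKernel μ r).le_of_opNorm_le ((b.norm_sineKernel_le μ r).trans_eq (abs_of_nonneg hr)) x

theorem continuous_sineKernel : Continuous (b.sineKernel μ) :=
  (b.lipschitzWith_diagonal.comp (lipschitzWith_sineCoeffs μ)).continuous

theorem continuousOn_sineKernel_sub_apply {f : ℝ → E} {s : Set ℝ} (hf : ContinuousOn f s)
    (t : ℝ) : ContinuousOn (fun r => b.sineKernel μ (t - r) (f r)) s :=
  ((b.continuous_sineKernel μ).comp (continuous_sub_left t)).continuousOn.clm_apply hf

variable {f : ℝ → E} {t : ℝ}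

theorem repr_integral_sineKernel [CompleteSpace E] (ht : 0 ≤ t) (hf : ContinuousOn f (Icc 0 t))
    (i : ι) :
    b.repr (∫ s in 0..t, b.sineKernel μ (t - s) (f s)) i
      = ∫ s in 0..t, sin (μ i * (t - s)) / μ i * b.repr (f s) i := by
  rw [b.repr_intervalIntegral
    ((b.continuousOn_sineKernel_sub_apply μ hf t).intervalIntegrable_of_Icc ht)]
  simp

theorem norm_integral_sineKernel_le (ht : 0 ≤ t) (hf : ContinuousOn f (Icc 0 t)) :
    ‖∫ s in 0..t, b.sineKernel μ (t - s) (f s)‖ ≤ ∫ s in 0..t, (t - s) * ‖f s‖ :=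
  intervalIntegral.norm_integral_le_of_norm_le ht
    (ae_of_all _ fun s hs => b.norm_sineKernel_apply_le μ (sub_nonneg.2 hs.2) (f s))
    (((continuous_sub_left t).continuousOn.mul hf.norm).intervalIntegrable_of_Icc ht)

end sineKernel

end HilbertBasis

open HilbertBasis in
theorem stmt14_general {H : Type*} [NormedAddCommGroup H] [InnerProductSpace ℝ H]
    [CompleteSpace H] (h : HilbertBasis ℕ ℝ H) (μ : ℕ → ℝ)
    (v0 : H) (T : ℝ)
    (f : ℝ → H) (hf : ContinuousOn f (Set.Icc 0 T))
    (t : ℝ) (ht : t ∈ Set.Icc (0:ℝ) T) :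
    Summable (fun i => (Real.sin (μ i * t) / μ i * ⟪v0, h i⟫
        + ∫ s in (0:ℝ)..t, Real.sin (μ i * (t - s)) / μ i * ⟪f s, h i⟫) ^ 2) ∧
    Summable (fun i => (Real.sin (μ i * t) / μ i * ⟪v0, h i⟫
        + ∫ s in (0:ℝ)..t, Real.sin (μ i * (t - s)) / μ i * ⟪f s, h i⟫) • h i) ∧
    ‖∑' i, (Real.sin (μ i * t) / μ i * ⟪v0, h i⟫
        + ∫ s in (0:ℝ)..t, Real.sin (μ i * (t - s)) / μ i * ⟪f s, h i⟫) • h i‖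
      ≤ t * ‖v0‖ + ∫ s in (0:ℝ)..t, (t - s) * ‖f s‖ := by
  obtain ⟨ht0, htT⟩ := ht
  have hf' : ContinuousOn f (Icc 0 t) := hf.mono (Icc_subset_Icc le_rfl htT)
  set u := h.sineKernel μ t v0 + ∫ s in 0..t, h.sineKernel μ (t - s) (f s)
  have hcoeff : ∀ i, sin (μ i * t) / μ i * ⟪v0, h i⟫
      + ∫ s in 0..t, sin (μ i * (t - s)) / μ i * ⟪f s, h i⟫ = h.repr u i := by
    intro i
    rw [map_add, lp.coeFn_add, Pi.add_apply, repr_sineKernel,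
      h.repr_integral_sineKernel μ ht0 hf']
    simp only [h.repr_apply_apply, real_inner_comm]
  simp only [hcoeff]
  refine ⟨h.summable_repr_sq u, (h.hasSum_repr u).summable, ?_⟩
  rw [(h.hasSum_repr u).tsum_eq]
  calc ‖u‖ ≤ ‖h.sineKernel μ t v0‖ + ‖∫ s in 0..t, h.sineKernel μ (t - s) (f s)‖ :=
        norm_add_le _ _
    _ ≤ t * ‖v0‖ + ∫ s in 0..t, (t - s) * ‖f s‖ :=
      add_le_add (h.norm_sineKernel_apply_le μ ht0 v0) (h.norm_integral_sineKernel_le μ ht0 hf')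

/-- Well-definedness of the memory-kernel representation: for a Hilbert basis
`(hᵢ)`, positive reals `(μᵢ)`, `v⁰ ∈ H` and continuous `f : [0,T] → H`, the
coefficients `(sin(μᵢt)/μᵢ)⟪v⁰,hᵢ⟫ + ∫₀ᵗ (sin(μᵢ(t−s))/μᵢ)⟪f(s),hᵢ⟫ ds` are
square-summable, the corresponding series converges in `H`, and its sum has
norm at most `t‖v⁰‖ + ∫₀ᵗ (t−s)‖f(s)‖ ds`. -/
theorem stmt14 {H : Type*} [NormedAddCommGroup H] [InnerProductSpace ℝ H]
    [CompleteSpace H] (h : HilbertBasis ℕ ℝ H) (μ : ℕ → ℝ)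
    (hμ : ∀ i, 0 < μ i) (v0 : H) (T : ℝ) (hT : 0 < T)
    (f : ℝ → H) (hf : ContinuousOn f (Set.Icc 0 T))
    (t : ℝ) (ht : t ∈ Set.Icc (0:ℝ) T) :
    Summable (fun i => (Real.sin (μ i * t) / μ i * ⟪v0, h i⟫
        + ∫ s in (0:ℝ)..t, Real.sin (μ i * (t - s)) / μ i * ⟪f s, h i⟫) ^ 2) ∧
    Summable (fun i => (Real.sin (μ i * t) / μ i * ⟪v0, h i⟫
        + ∫ s in (0:ℝ)..t, Real.sin (μ i * (t - s)) / μ i * ⟪f s, h i⟫) • h i) ∧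
    ‖∑' i, (Real.sin (μ i * t) / μ i * ⟪v0, h i⟫
        + ∫ s in (0:ℝ)..t, Real.sin (μ i * (t - s)) / μ i * ⟪f s, h i⟫) • h i‖
      ≤ t * ‖v0‖ + ∫ s in (0:ℝ)..t, (t - s) * ‖f s‖ :=
  stmt14_general h μ v0 T f hf t ht
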